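/- arXiv:2111.02797 — 2 statements merged into one kernel-verified Lean document; each statement's English description precedes it below -/
import Mathlib

section
/- Let f ∈ C([a,b]) and g ∈ C^n([a,b]). Then ∫_a^b ψ'(x) f(x) · ^C D^{α,ψ}_{[a,x]}g(x) dx = ∫_a^b ψ'(x) · I^{n−α,ψ}_{[x,b]}f(x) · (D_ψ^n g)(x) dx. -/
open MeasureTheory Set Filter

/-- The ψ-derivative operator `D_ψ f = f' / ψ'`. -/
noncomputable def Dpsi (ψ f : ℝ → ℝ) : ℝ → ℝ := fun x => deriv f x / deriv ψ x

/-- The `k`-fold iterate `D_ψ^k` (with `D_ψ^0 f = f`). -/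
noncomputable def DpsiIter (ψ : ℝ → ℝ) (k : ℕ) (f : ℝ → ℝ) : ℝ → ℝ := (Dpsi ψ)^[k] f

/-- The `k`-fold iterate `(−D_ψ)^k`. -/
noncomputable def negDpsiIter (ψ : ℝ → ℝ) (k : ℕ) (f : ℝ → ℝ) : ℝ → ℝ :=
  (fun g => fun x => -(Dpsi ψ g x))^[k] f

/-- Left ψ-Riemann–Liouville fractional integral
`I^{β,ψ}_{[a,x]} f (x) = (1/Γ(β)) ∫_a^x ψ'(t) f(t) (ψ(x) − ψ(t))^{β−1} dt`. -/
noncomputable def fracIntL (ψ : ℝ → ℝ) (β a : ℝ) (f : ℝ → ℝ) : ℝ → ℝ :=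
  fun x => (1 / Real.Gamma β) * ∫ t in a..x, deriv ψ t * f t * (ψ x - ψ t) ^ (β - 1)

/-- Right ψ-Riemann–Liouville fractional integral
`I^{β,ψ}_{[x,b]} f (x) = (1/Γ(β)) ∫_x^b ψ'(t) f(t) (ψ(t) − ψ(x))^{β−1} dt`. -/
noncomputable def fracIntR (ψ : ℝ → ℝ) (β b : ℝ) (f : ℝ → ℝ) : ℝ → ℝ :=
  fun x => (1 / Real.Gamma β) * ∫ t in x..b, deriv ψ t * f t * (ψ t - ψ x) ^ (β - 1)

/-- Left ψ-Riemann–Liouville fractional derivative `D^{α,ψ}_{[a,x]} f = D_ψ^n (I^{n−α,ψ}_{[a,x]} f)`. -/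
noncomputable def RLderivL (ψ : ℝ → ℝ) (α a : ℝ) (n : ℕ) (f : ℝ → ℝ) : ℝ → ℝ :=
  DpsiIter ψ n (fracIntL ψ ((n : ℝ) - α) a f)

/-- Right ψ-Riemann–Liouville fractional derivative `D^{α,ψ}_{[x,b]} f = (−D_ψ)^n (I^{n−α,ψ}_{[x,b]} f)`. -/
noncomputable def RLderivR (ψ : ℝ → ℝ) (α b : ℝ) (n : ℕ) (f : ℝ → ℝ) : ℝ → ℝ :=
  negDpsiIter ψ n (fracIntR ψ ((n : ℝ) - α) b f)

/-- Left ψ-Caputo fractional derivative `^C D^{α,ψ}_{[a,x]} f = I^{n−α,ψ}_{[a,x]} (D_ψ^n f)`. -/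
noncomputable def CaputoL (ψ : ℝ → ℝ) (α a : ℝ) (n : ℕ) (f : ℝ → ℝ) : ℝ → ℝ :=
  fracIntL ψ ((n : ℝ) - α) a (DpsiIter ψ n f)

/-- Right ψ-Caputo fractional derivative `^C D^{α,ψ}_{[x,b]} f = I^{n−α,ψ}_{[x,b]} ((−D_ψ)^n f)`. -/
noncomputable def CaputoR (ψ : ℝ → ℝ) (α b : ℝ) (n : ℕ) (f : ℝ → ℝ) : ℝ → ℝ :=
  fracIntR ψ ((n : ℝ) - α) b (negDpsiIter ψ n f)

/-- Riesz–Riemann–Liouville fractional derivative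
`^R D^{α,ψ}_{[a,b]} f = ½ (D^{α,ψ}_{[a,x]} f + (−1)^n D^{α,ψ}_{[x,b]} f)`. -/
noncomputable def RieszRL (ψ : ℝ → ℝ) (α a b : ℝ) (n : ℕ) (f : ℝ → ℝ) : ℝ → ℝ :=
  fun x => (1 / 2) * (RLderivL ψ α a n f x + (-1 : ℝ) ^ n * RLderivR ψ α b n f x)

/-- Riesz–Caputo fractional derivative
`^{RC} D^{α,ψ}_{[a,b]} f = ½ (^C D^{α,ψ}_{[a,x]} f + (−1)^n ^C D^{α,ψ}_{[x,b]} f)`. -/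
noncomputable def RieszCaputo (ψ : ℝ → ℝ) (α a b : ℝ) (n : ℕ) (f : ℝ → ℝ) : ℝ → ℝ :=
  fun x => (1 / 2) * (CaputoL ψ α a n f x + (-1 : ℝ) ^ n * CaputoR ψ α b n f x)

lemma aux_measurable_rpow_const {c : ℝ} (hc : c ≠ 0) : Measurable fun x : ℝ => x ^ c := by
  have h : (fun x : ℝ => x ^ c) = fun x =>
      if x = 0 then 0 else
        if x < 0 then Real.exp (Real.log x * c) * Real.cos (c * Real.pi)
        else Real.exp (Real.log x * c) := by
    funext x
    rcases lt_trichotomy x 0 with h | h | h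
    · rw [if_neg h.ne, if_pos h, Real.rpow_def_of_neg h]
    · rw [h, if_pos rfl, Real.zero_rpow hc]
    · rw [if_neg h.ne', if_neg (not_lt.2 h.le), Real.rpow_def_of_pos h]
  rw [h]
  apply Measurable.ite (by simp)
  · exact measurable_const
  · apply Measurable.ite (measurableSet_lt measurable_id measurable_const)
    · exact (Real.measurable_exp.comp (Real.measurable_log.mul measurable_const)).mul
        measurable_const
    · exact Real.measurable_exp.comp (Real.measurable_log.mul measurable_const)

lemma aux_measurable_dpsiIter (ψ g : ℝ → ℝ) (k : ℕ) (hk : 1 ≤ k) :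
    Measurable (DpsiIter ψ k g) := by
  obtain ⟨m, rfl⟩ : ∃ m, k = m + 1 := ⟨k - 1, by omega⟩
  rw [DpsiIter, Function.iterate_succ_apply']
  exact (measurable_deriv _).div (measurable_deriv _)

lemma aux_dpsiIter_rep (a b : ℝ) (hab : a < b) (n : ℕ) (ψ g : ℝ → ℝ)
    (hψ : ContDiffOn ℝ n ψ (Set.Icc a b)) (hψ' : ∀ x ∈ Set.Icc a b, deriv ψ x ≠ 0)
    (hg : ContDiffOn ℝ n g (Set.Icc a b)) :
    ∀ k, k ≤ n → ∃ G : ℝ → ℝ, ContDiffOn ℝ ((n - k : ℕ)) G (Set.Icc a b) ∧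
      Set.EqOn (DpsiIter ψ k g) G (Set.Ioo a b) := by
  have hU : UniqueDiffOn ℝ (Set.Icc a b) := uniqueDiffOn_Icc hab
  have hψdiff : ∀ x ∈ Set.Icc a b, DifferentiableAt ℝ ψ x := by
    intro x hx
    by_contra hc
    exact hψ' x hx (deriv_zero_of_not_differentiableAt hc)
  have hDψ_eq : ∀ x ∈ Set.Icc a b, derivWithin ψ (Set.Icc a b) x = deriv ψ x :=
    fun x hx => (hψdiff x hx).derivWithin (hU x hx)
  intro k
  induction k with
  | zero => exact fun _ => ⟨g, by simpa using hg, fun x _ => rfl⟩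
  | succ k ih =>
    intro hk
    obtain ⟨G, hG, hEq⟩ := ih (by omega)
    have h1k : (1 : WithTop ℕ∞) ≤ ((n - k : ℕ) : WithTop ℕ∞) := by exact_mod_cast (by omega : 1 ≤ n - k)
    refine ⟨fun x => derivWithin G (Set.Icc a b) x / derivWithin ψ (Set.Icc a b) x, ?_, ?_⟩
    · apply ContDiffOn.div
      · exact hG.derivWithin hU (by exact_mod_cast (by omega : n - (k+1) + 1 ≤ n - k))
      · exact (hψ.derivWithin hU (m := (n - 1 : ℕ))
          (by exact_mod_cast (by omega : n - 1 + 1 ≤ n))).of_le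
          (by exact_mod_cast (by omega : n - (k+1) ≤ n - 1))
      · intro x hx
        rw [hDψ_eq x hx]
        exact hψ' x hx
    · intro x hx
      have hxIcc : x ∈ Set.Icc a b := Set.Ioo_subset_Icc_self hx
      have hnb : Set.Icc a b ∈ nhds x := Icc_mem_nhds hx.1 hx.2
      have hGdiff : DifferentiableAt ℝ G x :=
        ((hG.differentiableOn (lt_of_lt_of_le zero_lt_one h1k).ne').differentiableAt hnb)
      have e1 : DpsiIter ψ (k+1) g x = deriv (DpsiIter ψ k g) x / deriv ψ x := by
        rw [DpsiIter, Function.iterate_succ_apply']; rfl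
      rw [e1]
      show _ = derivWithin G (Set.Icc a b) x / derivWithin ψ (Set.Icc a b) x
      rw [Filter.EventuallyEq.deriv_eq (Filter.eventuallyEq_of_mem (isOpen_Ioo.mem_nhds hx) hEq),
        hGdiff.derivWithin (hU x hxIcc), hDψ_eq x hxIcc]

/-- first step of fractional integration by parts:
`∫_a^b ψ' f · ^C D^{α,ψ}_{[a,x]} g dx = ∫_a^b ψ' · I^{n−α,ψ}_{[x,b]} f · D_ψ^n g dx`. -/
theorem integral_caputoL_eq_integral_fracIntR
    (a b α : ℝ) (n : ℕ) (ψ f g : ℝ → ℝ)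
    (hab : a < b) (hα : 0 < α) (hα_nonnat : ∀ m : ℕ, α ≠ m) (hn : n = ⌊α⌋₊ + 1)
    (hψ : ContDiffOn ℝ n ψ (Set.Icc a b)) (hψmono : StrictMonoOn ψ (Set.Icc a b))
    (hψ' : ∀ x ∈ Set.Icc a b, deriv ψ x ≠ 0)
    (hf : ContinuousOn f (Set.Icc a b))
    (hg : ContDiffOn ℝ n g (Set.Icc a b)) :
    ∫ x in a..b, deriv ψ x * f x * CaputoL ψ α a n g x =
      ∫ x in a..b, deriv ψ x * fracIntR ψ ((n : ℝ) - α) b f x * DpsiIter ψ n g x := by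
  have hn1 : 1 ≤ n := by omega
  have hncast : ((n : ℝ)) = (⌊α⌋₊ : ℝ) + 1 := by rw [hn]; push_cast; ring
  set β : ℝ := (n : ℝ) - α with hβdef
  have hβ0 : 0 < β := by
    have h1 : α < (⌊α⌋₊ : ℝ) + 1 := Nat.lt_floor_add_one α
    rw [hβdef, hncast]; linarith
  have hβ1 : β < 1 := by
    have hle : (⌊α⌋₊ : ℝ) ≤ α := Nat.floor_le hα.le
    rcases hle.lt_or_eq with h | h
    · rw [hβdef, hncast]; linarith
    · exact absurd h.symm (hα_nonnat ⌊α⌋₊)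
  have hβm1 : -1 < β - 1 := by linarith
  have hβm1' : β - 1 ≤ 0 := by linarith
  have hβne : β - 1 ≠ 0 := by linarith
  have hU : UniqueDiffOn ℝ (Set.Icc a b) := uniqueDiffOn_Icc hab
  have hψdiff : ∀ x ∈ Set.Icc a b, DifferentiableAt ℝ ψ x := by
    intro x hx; by_contra hc
    exact hψ' x hx (deriv_zero_of_not_differentiableAt hc)
  have hD_eq : ∀ x ∈ Set.Icc a b, derivWithin ψ (Set.Icc a b) x = deriv ψ x :=
    fun x hx => (hψdiff x hx).derivWithin (hU x hx)
  have hDcont : ContinuousOn (derivWithin ψ (Set.Icc a b)) (Set.Icc a b) :=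
    (hψ.derivWithin hU (m := (n - 1 : ℕ))
      (by exact_mod_cast (by omega : n - 1 + 1 ≤ n))).continuousOn
  -- positivity of derivWithin ψ with uniform lower bound c0
  obtain ⟨z, hz, hzmin⟩ := isCompact_Icc.exists_isMinOn (Set.nonempty_Icc.2 hab.le) hDcont
  set c0 : ℝ := derivWithin ψ (Set.Icc a b) z with hc0def
  have hDpos : ∀ x ∈ Set.Icc a b, 0 < derivWithin ψ (Set.Icc a b) x := by
    obtain ⟨ξ, hξ, hsl⟩ := exists_deriv_eq_slope ψ hab hψ.continuousOn
      (fun y hy => (hψdiff y (Set.Ioo_subset_Icc_self hy)).differentiableWithinAt)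
    have hξIcc : ξ ∈ Set.Icc a b := Set.Ioo_subset_Icc_self hξ
    have hξpos : 0 < derivWithin ψ (Set.Icc a b) ξ := by
      rw [hD_eq ξ hξIcc, hsl]
      exact div_pos (sub_pos.2 (hψmono (Set.left_mem_Icc.2 hab.le)
        (Set.right_mem_Icc.2 hab.le) hab)) (by linarith)
    intro x hx
    have hne : derivWithin ψ (Set.Icc a b) x ≠ 0 := by rw [hD_eq x hx]; exact hψ' x hx
    rcases hne.lt_or_gt with h | h
    · exfalso
      have hsub : Set.uIcc x ξ ⊆ Set.Icc a b := (Set.ordConnected_Icc).uIcc_subset hx hξIcc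
      have h0 : (0:ℝ) ∈ Set.uIcc (derivWithin ψ (Set.Icc a b) x) (derivWithin ψ (Set.Icc a b) ξ) :=
        Set.mem_uIcc.2 (Or.inl ⟨h.le, hξpos.le⟩)
      obtain ⟨y, hy, hy0⟩ := intermediate_value_uIcc (hDcont.mono hsub) h0
      have : derivWithin ψ (Set.Icc a b) y ≠ 0 := by
        rw [hD_eq y (hsub hy)]; exact hψ' y (hsub hy)
      exact this hy0
    · exact h
  have hc0pos : 0 < c0 := hDpos z hz
  have hc0le : ∀ x ∈ Set.Icc a b, c0 ≤ derivWithin ψ (Set.Icc a b) x :=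
    fun x hx => isMinOn_iff.1 hzmin x hx
  have hgrow : ∀ t ∈ Set.Icc a b, ∀ x ∈ Set.Icc a b, t < x → c0 * (x - t) ≤ ψ x - ψ t := by
    intro t ht x hx htx
    obtain ⟨ξ, hξ, hsl⟩ := exists_deriv_eq_slope ψ htx
      (hψ.continuousOn.mono (Set.Icc_subset_Icc ht.1 hx.2))
      (fun y hy => (hψdiff y ⟨ht.1.trans hy.1.le, hy.2.le.trans hx.2⟩).differentiableWithinAt)
    have hξIcc : ξ ∈ Set.Icc a b := ⟨ht.1.trans hξ.1.le, hξ.2.le.trans hx.2⟩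
    have hc : c0 ≤ (ψ x - ψ t) / (x - t) := by
      rw [← hsl, ← hD_eq ξ hξIcc]; exact hc0le ξ hξIcc
    have hxt : 0 < x - t := by linarith
    calc c0 * (x - t) ≤ (ψ x - ψ t) / (x - t) * (x - t) := by
          exact mul_le_mul_of_nonneg_right hc hxt.le
      _ = ψ x - ψ t := by field_simp
  -- continuous extensions of ψ and f
  set ψt : ℝ → ℝ := Set.IccExtend hab.le ((Set.Icc a b).restrict ψ) with hψtdef
  set ft : ℝ → ℝ := Set.IccExtend hab.le ((Set.Icc a b).restrict f) with hftdef
  have hψtc : Continuous ψt := (hψ.continuousOn.restrict).Icc_extend'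
  have hftc : Continuous ft := (hf.restrict).Icc_extend'
  have hψteq : ∀ x ∈ Set.Icc a b, ψt x = ψ x := fun x hx => Set.IccExtend_of_mem hab.le _ hx
  have hfteq : ∀ x ∈ Set.Icc a b, ft x = f x := fun x hx => Set.IccExtend_of_mem hab.le _ hx
  -- the n-th ψ-derivative of g and its continuous representative
  set h : ℝ → ℝ := DpsiIter ψ n g with hhdef
  have hmeas_h : Measurable h := aux_measurable_dpsiIter ψ g n hn1
  obtain ⟨G, hGcd, hGeq⟩ := aux_dpsiIter_rep a b hab n ψ g hψ hψ' hg n le_rfl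
  have hGcont : ContinuousOn G (Set.Icc a b) := hGcd.continuousOn
  -- uniform bounds
  obtain ⟨M1, hM1⟩ := isCompact_Icc.exists_bound_of_continuousOn hDcont
  obtain ⟨M2, hM2⟩ := isCompact_Icc.exists_bound_of_continuousOn hf
  obtain ⟨M3, hM3⟩ := isCompact_Icc.exists_bound_of_continuousOn hGcont
  set M : ℝ := max (max M1 M2) (max M3 1) with hMdef
  have hM0 : 0 < M := lt_of_lt_of_le one_pos ((le_max_right M3 1).trans (le_max_right _ _))
  have hMψ' : ∀ x ∈ Set.Icc a b, |deriv ψ x| ≤ M := by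
    intro x hx
    rw [← hD_eq x hx, ← Real.norm_eq_abs]
    exact (hM1 x hx).trans ((le_max_left M1 M2).trans (le_max_left _ _))
  have hMf : ∀ x ∈ Set.Icc a b, |f x| ≤ M := by
    intro x hx
    rw [← Real.norm_eq_abs]
    exact (hM2 x hx).trans ((le_max_right M1 M2).trans (le_max_left _ _))
  have hMh : ∀ x ∈ Set.Ioo a b, |h x| ≤ M := by
    intro x hx
    rw [hhdef, hGeq hx, ← Real.norm_eq_abs]
    exact (hM3 x (Set.Ioo_subset_Icc_self hx)).trans ((le_max_left M3 1).trans (le_max_right _ _))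
  set C : ℝ := M ^ 4 * c0 ^ (β - 1) with hCdef
  have hC0 : 0 ≤ C := mul_nonneg (by positivity) (Real.rpow_nonneg hc0pos.le _)
  -- the kernel function
  set F : ℝ → ℝ → ℝ := fun x t =>
    if t < x then (deriv ψ x * ft x) * ((deriv ψ t * h t) * (ψt x - ψt t) ^ (β - 1)) else 0
    with hFdef
  have hFmeas : Measurable (Function.uncurry F) := by
    have hrw : Function.uncurry F = fun p : ℝ × ℝ =>
        Set.indicator {q : ℝ × ℝ | q.2 < q.1}
          (fun q => (deriv ψ q.1 * ft q.1) *
            ((deriv ψ q.2 * h q.2) * (ψt q.1 - ψt q.2) ^ (β - 1))) p := by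
      funext p
      by_cases hp : p.2 < p.1
      · simp [Function.uncurry, hFdef, hp, Set.indicator_of_mem, Set.mem_setOf_eq]
      · simp [Function.uncurry, hFdef, hp, Set.indicator_of_notMem, Set.mem_setOf_eq]
    rw [hrw]
    apply Measurable.indicator
    · exact (((measurable_deriv ψ).comp measurable_fst).mul
        (hftc.measurable.comp measurable_fst)).mul
        ((((measurable_deriv ψ).comp measurable_snd).mul (hmeas_h.comp measurable_snd)).mul
          ((aux_measurable_rpow_const hβne).comp
            ((hψtc.measurable.comp measurable_fst).sub (hψtc.measurable.comp measurable_snd))))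
    · exact measurableSet_lt measurable_snd measurable_fst
  have hFsec : ∀ x, Measurable (F x) := fun x => hFmeas.of_uncurry_left
  -- pointwise bound
  have hFbound : ∀ x ∈ Set.Ioo a b, ∀ t ∈ Set.Ioo a b,
      ‖F x t‖ ≤ Set.indicator (Set.Ioo a x) (fun t => C * (x - t) ^ (β - 1)) t := by
    intro x hx t ht
    by_cases htx : t < x
    · have htax : t ∈ Set.Ioo a x := ⟨ht.1, htx⟩
      rw [Set.indicator_of_mem htax]
      have hxI : x ∈ Set.Icc a b := Set.Ioo_subset_Icc_self hx
      have htI : t ∈ Set.Icc a b := Set.Ioo_subset_Icc_self ht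
      have hψd : 0 < ψ x - ψ t := sub_pos.2 (hψmono htI hxI htx)
      have hxt : 0 < x - t := by linarith [htx]
      have hker : (ψ x - ψ t) ^ (β - 1) ≤ c0 ^ (β - 1) * (x - t) ^ (β - 1) := by
        have h1 : c0 * (x - t) ≤ ψ x - ψ t := hgrow t htI x hxI htx
        have h2 : (ψ x - ψ t) ^ (β - 1) ≤ (c0 * (x - t)) ^ (β - 1) :=
          Real.rpow_le_rpow_of_nonpos (by positivity) h1 hβm1'
        rwa [Real.mul_rpow hc0pos.le hxt.le] at h2
      have hkerpos : 0 ≤ (ψ x - ψ t) ^ (β - 1) := Real.rpow_nonneg hψd.le _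
      have hFval : F x t = (deriv ψ x * f x) * ((deriv ψ t * h t) * (ψ x - ψ t) ^ (β - 1)) := by
        rw [hFdef]
        simp only [if_pos htx]
        rw [hψteq x hxI, hψteq t htI, hfteq x hxI]
      rw [hFval]
      have habs : ‖(deriv ψ x * f x) * ((deriv ψ t * h t) * (ψ x - ψ t) ^ (β - 1))‖
          = |deriv ψ x| * |f x| * (|deriv ψ t| * |h t|) * ((ψ x - ψ t) ^ (β - 1)) := by
        rw [Real.norm_eq_abs, abs_mul, abs_mul, abs_mul, abs_mul, abs_of_nonneg hkerpos]
        ring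
      rw [habs]
      calc |deriv ψ x| * |f x| * (|deriv ψ t| * |h t|) * ((ψ x - ψ t) ^ (β - 1))
          ≤ M * M * (M * M) * (c0 ^ (β - 1) * (x - t) ^ (β - 1)) := by
            gcongr
            · exact hMψ' x hxI
            · exact hMf x hxI
            · exact hMψ' t htI
            · exact hMh t ht
        _ = C * (x - t) ^ (β - 1) := by rw [hCdef]; ring
    · have hF0 : F x t = 0 := by rw [hFdef]; simp only [if_neg htx]
      rw [hF0, Set.indicator_of_notMem (fun hc => htx hc.2)]
      simp
  -- per-x integrability of the dominating kernel
  have hker_int : ∀ x, a ≤ x → IntegrableOn (fun t => C * (x - t) ^ (β - 1)) (Set.Ioo a x) volume := by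
    intro x hax
    have h1 : IntervalIntegrable (fun u : ℝ => u ^ (β - 1)) volume 0 (x - a) :=
      intervalIntegral.intervalIntegrable_rpow' hβm1
    have h2 : IntervalIntegrable (fun t : ℝ => (x - t) ^ (β - 1)) volume a x := by
      have h3 := (h1.comp_sub_left x).symm
      simpa using h3
    have h4 := h2.const_mul C
    exact ((intervalIntegrable_iff_integrableOn_Ioo_of_le hax).1 h4)
  have hFint : ∀ x ∈ Set.Ioo a b, Integrable (F x) (volume.restrict (Set.Ioo a b)) := by
    intro x hx
    apply Integrable.mono'
      (g := Set.indicator (Set.Ioo a x) (fun t => C * (x - t) ^ (β - 1)))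
    · exact ((hker_int x hx.1.le).integrable_indicator measurableSet_Ioo).integrableOn
    · exact (hFsec x).aestronglyMeasurable
    · exact (ae_restrict_mem measurableSet_Ioo).mono fun t ht => hFbound x hx t ht
  set B : ℝ := C * ((b - a) ^ β / β) with hBdef
  have hval : ∀ x ∈ Set.Ioo a b, ∫ t in Set.Ioo a b, ‖F x t‖ ≤ B := by
    intro x hx
    have hind : Integrable (Set.indicator (Set.Ioo a x) (fun t => C * (x - t) ^ (β - 1)))
        (volume.restrict (Set.Ioo a b)) :=
      ((hker_int x hx.1.le).integrable_indicator measurableSet_Ioo).integrableOn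
    have step1 : ∫ t in Set.Ioo a b, ‖F x t‖
        ≤ ∫ t in Set.Ioo a b, Set.indicator (Set.Ioo a x) (fun t => C * (x - t) ^ (β - 1)) t :=
      integral_mono_ae ((hFint x hx).norm) hind
        ((ae_restrict_mem measurableSet_Ioo).mono fun t ht => hFbound x hx t ht)
    have step2 : ∫ t in Set.Ioo a b, Set.indicator (Set.Ioo a x) (fun t => C * (x - t) ^ (β - 1)) t
        = ∫ t in Set.Ioo a x, C * (x - t) ^ (β - 1) := by
      rw [integral_indicator measurableSet_Ioo, Measure.restrict_restrict measurableSet_Ioo,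
        Set.Ioo_inter_Ioo, max_self, min_eq_left hx.2.le]
    have step3 : ∫ t in Set.Ioo a x, C * (x - t) ^ (β - 1) = C * ((x - a) ^ β / β) := by
      rw [← MeasureTheory.integral_Ioc_eq_integral_Ioo,
        ← intervalIntegral.integral_of_le hx.1.le, intervalIntegral.integral_const_mul]
      congr 1
      rw [intervalIntegral.integral_comp_sub_left (fun u : ℝ => u ^ (β - 1)) x, sub_self,
        integral_rpow (Or.inl hβm1), Real.zero_rpow (by linarith : β - 1 + 1 ≠ 0),
        sub_add_cancel]
      ring
    have step4 : C * ((x - a) ^ β / β) ≤ B := by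
      rw [hBdef]
      have h5 : (x - a) ^ β ≤ (b - a) ^ β := by
        apply Real.rpow_le_rpow (by linarith [hx.1]) (by linarith [hx.2]) hβ0.le
      have h6 : (x - a) ^ β / β ≤ (b - a) ^ β / β := by gcongr
      exact mul_le_mul_of_nonneg_left h6 hC0
    calc ∫ t in Set.Ioo a b, ‖F x t‖ ≤ _ := step1
      _ = _ := step2
      _ = _ := step3
      _ ≤ B := step4
  -- integrability on the product
  have hprod : Integrable (Function.uncurry F)
      ((volume.restrict (Set.Ioo a b)).prod (volume.restrict (Set.Ioo a b))) := by
    rw [MeasureTheory.integrable_prod_iff hFmeas.aestronglyMeasurable]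
    constructor
    · exact (ae_restrict_mem measurableSet_Ioo).mono fun x hx => hFint x hx
    · apply Integrable.mono' (integrable_const B)
      · exact hFmeas.aestronglyMeasurable.norm.integral_prod_right'
      · refine (ae_restrict_mem measurableSet_Ioo).mono fun x hx => ?_
        simp only [Function.uncurry_apply_pair]
        have h0 : 0 ≤ ∫ t in Set.Ioo a b, ‖F x t‖ := integral_nonneg fun t => norm_nonneg _
        rw [Real.norm_eq_abs, abs_of_nonneg h0]
        exact hval x hx
  have hswap : ∫ x in Set.Ioo a b, ∫ t in Set.Ioo a b, F x t
      = ∫ t in Set.Ioo a b, ∫ x in Set.Ioo a b, F x t :=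
    MeasureTheory.integral_integral_swap hprod
  -- identification of the left integrand
  have hleft : ∀ x ∈ Set.Ioo a b,
      deriv ψ x * f x * CaputoL ψ α a n g x = (1 / Real.Gamma β) * ∫ t in Set.Ioo a b, F x t := by
    intro x hx
    have hxI : x ∈ Set.Icc a b := Set.Ioo_subset_Icc_self hx
    have e1 : ∫ t in Set.Ioo a b, F x t
        = ∫ t in Set.Ioo a x, (deriv ψ x * f x) * (deriv ψ t * h t * (ψ x - ψ t) ^ (β - 1)) := by
      have hind : ∀ t, F x t = Set.indicator (Set.Iio x)
          (fun t => (deriv ψ x * ft x) * ((deriv ψ t * h t) * (ψt x - ψt t) ^ (β - 1))) t := by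
        intro t
        by_cases htx : t < x
        · rw [hFdef]; simp only [if_pos htx]
          rw [Set.indicator_of_mem (Set.mem_Iio.2 htx)]
        · rw [hFdef]; simp only [if_neg htx]
          have hnot : t ∉ Set.Iio x := fun hc => htx hc
          rw [Set.indicator_of_notMem hnot]
      simp only [hind]
      rw [integral_indicator measurableSet_Iio, Measure.restrict_restrict measurableSet_Iio]
      have hset : Set.Iio x ∩ Set.Ioo a b = Set.Ioo a x := by
        ext t
        constructor
        · rintro ⟨h1, h2, h3⟩; exact ⟨h2, h1⟩
        · rintro ⟨h1, h2⟩; exact ⟨h2, h1, h2.trans hx.2⟩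
      rw [hset]
      apply setIntegral_congr_fun measurableSet_Ioo
      intro t ht
      have htI : t ∈ Set.Icc a b := ⟨ht.1.le, ht.2.le.trans hxI.2⟩
      simp only [hψteq x hxI, hψteq t htI, hfteq x hxI]
    rw [e1]
    show deriv ψ x * f x * CaputoL ψ α a n g x = _
    unfold CaputoL fracIntL
    rw [← hhdef, ← hβdef]
    rw [intervalIntegral.integral_of_le hx.1.le, MeasureTheory.integral_Ioc_eq_integral_Ioo,
      MeasureTheory.integral_const_mul]
    ring
  -- identification of the right integrand
  have hright : ∀ t ∈ Set.Ioo a b,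
      (1 / Real.Gamma β) * ∫ x in Set.Ioo a b, F x t
        = deriv ψ t * fracIntR ψ β b f t * h t := by
    intro t ht
    have htI : t ∈ Set.Icc a b := Set.Ioo_subset_Icc_self ht
    have e1 : ∫ x in Set.Ioo a b, F x t
        = (deriv ψ t * h t) * ∫ x in Set.Ioc t b, deriv ψ x * f x * (ψ x - ψ t) ^ (β - 1) := by
      have hind : ∀ x, F x t = Set.indicator (Set.Ioi t)
          (fun x => (deriv ψ x * ft x) * ((deriv ψ t * h t) * (ψt x - ψt t) ^ (β - 1))) x := by
        intro x
        by_cases htx : t < x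
        · rw [hFdef]; simp only [if_pos htx]
          rw [Set.indicator_of_mem (Set.mem_Ioi.2 htx)]
        · rw [hFdef]; simp only [if_neg htx]
          have hnot : x ∉ Set.Ioi t := fun hc => htx hc
          rw [Set.indicator_of_notMem hnot]
      simp only [hind]
      rw [integral_indicator measurableSet_Ioi, Measure.restrict_restrict measurableSet_Ioi]
      have hset : Set.Ioi t ∩ Set.Ioo a b = Set.Ioo t b := by
        ext x
        constructor
        · rintro ⟨h1, h2, h3⟩; exact ⟨h1, h3⟩
        · rintro ⟨h1, h2⟩; exact ⟨h1, ht.1.trans h1, h2⟩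
      rw [hset, ← MeasureTheory.integral_Ioc_eq_integral_Ioo,
        ← MeasureTheory.integral_const_mul]
      apply setIntegral_congr_fun measurableSet_Ioc
      intro x hx
      have hxI : x ∈ Set.Icc a b := ⟨(ht.1.trans hx.1).le, hx.2⟩
      simp only [hψteq x hxI, hψteq t htI, hfteq x hxI]
      ring
    rw [e1]
    show _ = deriv ψ t * fracIntR ψ β b f t * h t
    unfold fracIntR
    rw [intervalIntegral.integral_of_le ht.2.le]
    ring
  -- final assembly
  calc ∫ x in a..b, deriv ψ x * f x * CaputoL ψ α a n g x
      = ∫ x in Set.Ioo a b, deriv ψ x * f x * CaputoL ψ α a n g x := by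
        rw [intervalIntegral.integral_of_le hab.le, MeasureTheory.integral_Ioc_eq_integral_Ioo]
    _ = ∫ x in Set.Ioo a b, (1 / Real.Gamma β) * ∫ t in Set.Ioo a b, F x t :=
        setIntegral_congr_fun measurableSet_Ioo fun x hx => hleft x hx
    _ = (1 / Real.Gamma β) * ∫ x in Set.Ioo a b, ∫ t in Set.Ioo a b, F x t :=
        MeasureTheory.integral_const_mul _ _
    _ = (1 / Real.Gamma β) * ∫ t in Set.Ioo a b, ∫ x in Set.Ioo a b, F x t := by rw [hswap]
    _ = ∫ t in Set.Ioo a b, (1 / Real.Gamma β) * ∫ x in Set.Ioo a b, F x t :=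
        (MeasureTheory.integral_const_mul _ _).symm
    _ = ∫ t in Set.Ioo a b, deriv ψ t * fracIntR ψ β b f t * h t :=
        setIntegral_congr_fun measurableSet_Ioo fun t ht => hright t ht
    _ = ∫ x in a..b, deriv ψ x * fracIntR ψ β b f x * DpsiIter ψ n g x := by
        rw [hhdef, intervalIntegral.integral_of_le hab.le,
          MeasureTheory.integral_Ioc_eq_integral_Ioo]
end

section
/- For 1 ≤ p < ∞, the fractional Sobolev space W^{α,ψ}_p(Ω) is separable: there exists a countable subset S ⊆ W^{α,ψ}_p(Ω) such that for every u ∈ W^{α,ψ}_p(Ω) and every ε > 0 there is s ∈ S with ‖u − s‖_{W^{α,ψ}_p} < ε. -/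
open MeasureTheory Set Filter

/-- `v` is a weak Riesz ψ-fractional derivative of `u` on `[a,b]`:
`∫_a^b ψ' u · ^R D^{α,ψ}_{[a,b]} g = (−1)^n ∫_a^b ψ' v g` for every test function
`g ∈ C^n([a,b])` with `D_ψ^i g (a) = D_ψ^i g (b) = 0` for `i = 0,…,n−1`. -/
def HasWeakRieszDeriv (ψ : ℝ → ℝ) (α a b : ℝ) (n : ℕ) (u v : ℝ → ℝ) : Prop :=
  ∀ g : ℝ → ℝ, ContDiffOn ℝ n g (Set.Icc a b) →
    (∀ i < n, DpsiIter ψ i g a = 0 ∧ DpsiIter ψ i g b = 0) →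
    ∫ x in a..b, deriv ψ x * u x * RieszRL ψ α a b n g x =
      (-1 : ℝ) ^ n * ∫ x in a..b, deriv ψ x * v x * g x

/-- `u` belongs to the fractional Sobolev space `W^{α,ψ}_p([a,b])`, with weak Riesz
ψ-fractional derivative `v`: both `u` and `v` are in `L^p([a,b])` and `v` is a weak
Riesz ψ-fractional derivative of `u`. -/
def MemW (ψ : ℝ → ℝ) (α a b p : ℝ) (n : ℕ) (u v : ℝ → ℝ) : Prop :=
  MemLp u (ENNReal.ofReal p) (volume.restrict (Set.Icc a b)) ∧
  MemLp v (ENNReal.ofReal p) (volume.restrict (Set.Icc a b)) ∧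
  HasWeakRieszDeriv ψ α a b n u v

/-- The `W^{α,ψ}_p` norm of `u`, expressed through `u` and its weak Riesz
ψ-fractional derivative `v`: `(∫_a^b |u|^p + ∫_a^b |v|^p)^{1/p}`. -/
noncomputable def Wnorm (a b p : ℝ) (u v : ℝ → ℝ) : ℝ :=
  ((∫ x in a..b, |u x| ^ p) + ∫ x in a..b, |v x| ^ p) ^ (1 / p)

/-- Auxiliary: small `Lp` seminorm gives small `p`-integral over `a..b`. -/
lemma W_sep_key (a b p : ℝ) (hab : a ≤ b) (hp0 : 0 < p) (f : ℝ → ℝ) (δ : ℝ)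
    (hlt : (eLpNorm f (ENNReal.ofReal p) (volume.restrict (Set.Icc a b))).toReal < δ)
    (hf : MemLp f (ENNReal.ofReal p) (volume.restrict (Set.Icc a b))) :
    (∫ x in a..b, |f x| ^ p) < δ ^ p ∧ 0 ≤ ∫ x in a..b, |f x| ^ p := by
  set μ := volume.restrict (Set.Icc a b)
  have hq0 : (ENNReal.ofReal p) ≠ 0 := by
    simp [ENNReal.ofReal_eq_zero, not_le, hp0]
  have hqt : (ENNReal.ofReal p) ≠ ⊤ := ENNReal.ofReal_ne_top
  set A := ∫ x, ‖f x‖ ^ p ∂μ with hA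
  have hAnn : 0 ≤ A := integral_nonneg fun x => Real.rpow_nonneg (norm_nonneg _) _
  have hsnorm : (eLpNorm f (ENNReal.ofReal p) μ).toReal = A ^ p⁻¹ := by
    rw [hf.eLpNorm_eq_integral_rpow_norm hq0 hqt]
    rw [ENNReal.toReal_ofReal (Real.rpow_nonneg (by
      rw [ENNReal.toReal_ofReal hp0.le]; exact hAnn) _)]
    rw [ENNReal.toReal_ofReal hp0.le]
  have hint : (∫ x in a..b, |f x| ^ p) = A := by
    rw [intervalIntegral.integral_of_le hab, hA]
    rw [show μ = volume.restrict (Set.Icc a b) from rfl,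
      MeasureTheory.integral_Icc_eq_integral_Ioc]
    simp [Real.norm_eq_abs]
  have hAδ : A ^ p⁻¹ < δ := hsnorm ▸ hlt
  have hApow : A < δ ^ p := by
    have := Real.rpow_lt_rpow (Real.rpow_nonneg hAnn _) hAδ hp0
    rwa [← Real.rpow_mul hAnn, inv_mul_cancel₀ hp0.ne', Real.rpow_one] at this
  exact ⟨hint ▸ hApow, hint ▸ hAnn⟩

/-- the fractional Sobolev space `W^{α,ψ}_p([a,b])` is separable: there is
a countable subset which is dense for the `W^{α,ψ}_p` norm. -/
theorem W_separable
    (a b α : ℝ) (n : ℕ) (ψ : ℝ → ℝ) (p : ℝ)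
    (hab : a < b) (hα : 0 < α) (hα_nonnat : ∀ m : ℕ, α ≠ m) (hn : n = ⌊α⌋₊ + 1)
    (hψ : ContDiffOn ℝ n ψ (Set.Icc a b)) (hψmono : StrictMonoOn ψ (Set.Icc a b))
    (hψ' : ∀ x ∈ Set.Icc a b, deriv ψ x ≠ 0)
    (hp : 1 ≤ p) :
    ∃ S : Set ((ℝ → ℝ) × (ℝ → ℝ)), S.Countable ∧
      (∀ s ∈ S, MemW ψ α a b p n s.1 s.2) ∧
      ∀ u v : ℝ → ℝ, MemW ψ α a b p n u v → ∀ ε > 0, ∃ s ∈ S,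
        Wnorm a b p (fun x => u x - s.1 x) (fun x => v x - s.2 x) < ε := by
  classical
  set μ := volume.restrict (Set.Icc a b) with hμdef
  set q := ENNReal.ofReal p with hqdef
  have hp0 : 0 < p := lt_of_lt_of_le one_pos hp
  haveI : Fact (1 ≤ q) := ⟨by rwa [hqdef, ENNReal.one_le_ofReal]⟩
  haveI : Fact (q ≠ ⊤) := ⟨ENNReal.ofReal_ne_top⟩
  let L := Lp ℝ q μ
  let W : Set (L × L) := {z | ∃ u v, ∃ h : MemW ψ α a b p n u v,
    z = (h.1.toLp u, h.2.1.toLp v)}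
  obtain ⟨D, Dcount, Ddense⟩ := TopologicalSpace.exists_countable_dense (↥W)
  let rep : ↥W → (ℝ → ℝ) × (ℝ → ℝ) := fun w => (w.2.choose, w.2.choose_spec.choose)
  refine ⟨rep '' D, Dcount.image rep, ?_, ?_⟩
  · rintro s ⟨w, _, rfl⟩
    exact w.2.choose_spec.choose_spec.choose
  · intro u v huv ε hε
    have hz : ((huv.1.toLp u, huv.2.1.toLp v) : L × L) ∈ W := ⟨u, v, huv, rfl⟩
    set z : ↥W := ⟨(huv.1.toLp u, huv.2.1.toLp v), hz⟩ with hzdef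
    have hδ : (0:ℝ) < ε / 2 := by linarith
    obtain ⟨d, hd⟩ := (Metric.dense_iff.1 Ddense z (ε / 2) hδ)
    obtain ⟨hdball, hdD⟩ := hd
    refine ⟨rep d, Set.mem_image_of_mem rep hdD, ?_⟩
    have hrep : MemW ψ α a b p n (rep d).1 (rep d).2 :=
      d.2.choose_spec.choose_spec.choose
    have hdz : (d : L × L) =
        ((hrep.1.toLp (rep d).1 : L), (hrep.2.1.toLp (rep d).2 : L)) :=
      d.2.choose_spec.choose_spec.choose_spec
    have hdist : dist (z : L × L) (d : L × L) < ε / 2 := by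
      have := Metric.mem_ball.1 hdball
      rwa [dist_comm, Subtype.dist_eq] at this
    rw [Prod.dist_eq] at hdist
    have hdist1 : dist (huv.1.toLp u) (hrep.1.toLp (rep d).1) < ε / 2 := by
      have h1 := lt_of_le_of_lt (le_max_left _ _) hdist
      rwa [hzdef, hdz] at h1
    have hdist2 : dist (huv.2.1.toLp v) (hrep.2.1.toLp (rep d).2) < ε / 2 := by
      have h2 := lt_of_le_of_lt (le_max_right _ _) hdist
      rwa [hzdef, hdz] at h2
    -- convert Lp distances to eLpNorm of differences
    have hmem1 : MemLp (u - (rep d).1) q μ := huv.1.sub hrep.1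
    have hmem2 : MemLp (v - (rep d).2) q μ := huv.2.1.sub hrep.2.1
    have he1 : (eLpNorm (u - (rep d).1) q μ).toReal < ε / 2 := by
      rw [← MeasureTheory.Lp.norm_toLp _ hmem1,
        MeasureTheory.MemLp.toLp_sub huv.1 hrep.1, ← dist_eq_norm]
      exact hdist1
    have he2 : (eLpNorm (v - (rep d).2) q μ).toReal < ε / 2 := by
      rw [← MeasureTheory.Lp.norm_toLp _ hmem2,
        MeasureTheory.MemLp.toLp_sub huv.2.1 hrep.2.1, ← dist_eq_norm]
      exact hdist2
    obtain ⟨hI1, hI1nn⟩ := W_sep_key a b p hab.le hp0 _ _ he1 hmem1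
    obtain ⟨hI2, hI2nn⟩ := W_sep_key a b p hab.le hp0 _ _ he2 hmem2
    simp only [Pi.sub_apply] at hI1 hI1nn hI2 hI2nn
    rw [Wnorm]
    have hsum : (∫ x in a..b, |u x - (rep d).1 x| ^ p)
        + (∫ x in a..b, |v x - (rep d).2 x| ^ p) < 2 * (ε / 2) ^ p := by
      have := add_lt_add hI1 hI2; linarith
    have hstep : ((∫ x in a..b, |u x - (rep d).1 x| ^ p)
        + (∫ x in a..b, |v x - (rep d).2 x| ^ p)) ^ (1 / p)
        < (2 * (ε / 2) ^ p) ^ (1 / p) := by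
      apply Real.rpow_lt_rpow (by linarith) hsum
      positivity
    refine lt_of_lt_of_le hstep ?_
    have h2p : (2 * (ε / 2) ^ p) ^ (1 / p) = 2 ^ (1 / p) * (ε / 2) := by
      rw [Real.mul_rpow (by norm_num) (Real.rpow_nonneg hδ.le _),
        ← Real.rpow_mul hδ.le, mul_one_div, div_self hp0.ne', Real.rpow_one]
    rw [h2p]
    have h2le : (2:ℝ) ^ (1 / p) ≤ 2 := by
      calc (2:ℝ) ^ (1 / p) ≤ (2:ℝ) ^ (1:ℝ) :=
            Real.rpow_le_rpow_of_exponent_le (by norm_num)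
              (by rw [div_le_one hp0]; exact hp)
        _ = 2 := Real.rpow_one 2
    calc (2:ℝ) ^ (1 / p) * (ε / 2) ≤ 2 * (ε / 2) :=
          mul_le_mul_of_nonneg_right h2le hδ.le
      _ = ε := by ring
end
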